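/- arXiv:2310.11294 — 3 statements merged into one kernel-verified Lean document; each statement's English description precedes it below -/
import Mathlib

section
/- Let (V, Q) be an FBAS and let i ∈ V. Then i does not belong to the top tier T (the union of all minimal quorums) if and only if the set W^i of coalitions for which i is critical is empty, i.e., there is no set S ⊆ V with i ∈ S such that S contains a quorum but S \ {i} contains no quorum. -/
open scoped Classical

variable {α : Type*} [DecidableEq α]

/-- `(V, Q)` is an FBAS: `Q` assigns to each node `i ∈ V` a nonempty collection of
quorum slices, each slice being a subset of `V` containing `i` itself. -/
def IsFBAS (V : Finset α) (Q : α → Finset (Finset α)) : Prop :=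
  ∀ i ∈ V, (Q i).Nonempty ∧ ∀ q ∈ Q i, i ∈ q ∧ q ⊆ V

/-- A quorum is a nonempty `U ⊆ V` containing a slice of each of its members. -/
def IsQuorum (V : Finset α) (Q : α → Finset (Finset α)) (U : Finset α) : Prop :=
  U.Nonempty ∧ U ⊆ V ∧ ∀ i ∈ U, ∃ q ∈ Q i, q ⊆ U

/-- A minimal quorum is a quorum no proper subset of which is a quorum. -/
def IsMinimalQuorum (V : Finset α) (Q : α → Finset (Finset α)) (U : Finset α) : Prop :=
  IsQuorum V Q U ∧ ∀ U' ⊂ U, ¬ IsQuorum V Q U'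

/-- A coalition `S` is winning iff it contains a quorum. -/
def ContainsQuorum (V : Finset α) (Q : α → Finset (Finset α)) (S : Finset α) : Prop :=
  ∃ U, IsQuorum V Q U ∧ U ⊆ S

/-- Node `i` is critical for coalition `S` if `i ∈ S`, `S` contains a quorum,
but `S \ {i}` contains no quorum. -/
def Critical (V : Finset α) (Q : α → Finset (Finset α)) (i : α) (S : Finset α) : Prop :=
  i ∈ S ∧ ContainsQuorum V Q S ∧ ¬ ContainsQuorum V Q (S.erase i)

/-- The characteristic function of the FBAS game: `v S = 1` if `S` contains a quorum,
`0` otherwise. -/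
noncomputable def charFunc (V : Finset α) (Q : α → Finset (Finset α)) (S : Finset α) : ℚ :=
  if ContainsQuorum V Q S then 1 else 0

/-- The Shapley-Shubik power index of node `i`:
`φ_i = Σ_{S ∈ W^i} (|S| - 1)! (n - |S|)! / n!` with `n = |V|`. -/
noncomputable def sspi (V : Finset α) (Q : α → Finset (Finset α)) (i : α) : ℚ :=
  ∑ S ∈ V.powerset.filter (fun S => Critical V Q i S),
    (Nat.factorial (S.card - 1) * Nat.factorial (V.card - S.card) : ℚ) /
      Nat.factorial V.card

/-- Every quorum contains a minimal quorum. -/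
lemma exists_minimal_subquorum (V : Finset α) (Q : α → Finset (Finset α)) :
    ∀ U : Finset α, IsQuorum V Q U → ∃ U₀ ⊆ U, IsMinimalQuorum V Q U₀ := by
  intro U
  induction U using Finset.strongInduction with
  | _ U ih =>
    intro hU
    by_cases h : ∀ U' ⊂ U, ¬ IsQuorum V Q U'
    · exact ⟨U, subset_rfl, hU, h⟩
    · push_neg at h
      obtain ⟨U', hsub, hq⟩ := h
      obtain ⟨U₀, h0, hmin⟩ := ih U' hsub hq
      exact ⟨U₀, h0.trans hsub.subset, hmin⟩

/-- `i ∉ T` (the union of all minimal quorums) iff `W^i = ∅`, i.e. there is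
no coalition `S ⊆ V` with `i ∈ S` such that `S` contains a quorum but `S \ {i}` does not. -/
theorem not_in_top_tier_iff_no_critical_coalition
    (V : Finset α) (Q : α → Finset (Finset α)) (hFBAS : IsFBAS V Q)
    (i : α) (hi : i ∈ V) :
    (¬ ∃ U, IsMinimalQuorum V Q U ∧ i ∈ U) ↔ ¬ ∃ S ⊆ V, Critical V Q i S := by
  apply not_congr
  constructor
  · rintro ⟨U, ⟨hU, hmin⟩, hiU⟩
    refine ⟨U, hU.2.1, hiU, ⟨U, hU, subset_rfl⟩, ?_⟩
    rintro ⟨U', hqU', hsub⟩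
    have hne : i ∉ U' := fun h => (Finset.mem_erase.mp (hsub h)).1 rfl
    have hss : U' ⊂ U :=
      lt_of_le_of_ne (hsub.trans (Finset.erase_subset i U)) (fun h => hne (h ▸ hiU))
    exact hmin U' hss hqU'
  · rintro ⟨S, hSV, hiS, ⟨U, hqU, hUS⟩, hno⟩
    obtain ⟨U₀, hU₀U, hmin⟩ := exists_minimal_subquorum V Q U hqU
    by_cases hiU₀ : i ∈ U₀
    · exact ⟨U₀, hmin, hiU₀⟩
    · exact absurd ⟨U₀, hmin.1, Finset.subset_erase.mpr ⟨(hU₀U.trans hUS), hiU₀⟩⟩ hno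
end

section
/- Let (V, Q) be an FBAS and let i ∈ V. If there exists a coalition S ⊆ V with i ∈ S such that S contains a quorum but S \ {i} contains no quorum, then i belongs to some minimal quorum (hence i is in the top tier T). -/
open scoped Classical

variable {α : Type*} [DecidableEq α]

theorem exists_minimal_quorum_subset
    (V : Finset α) (Q : α → Finset (Finset α)) (U : Finset α)
    (hU : IsQuorum V Q U) :
    ∃ U' ⊆ U, IsMinimalQuorum V Q U' := by
  induction U using Finset.strongInductionOn with
  | _ U ih =>
    by_cases hmin : ∀ U' ⊂ U, ¬ IsQuorum V Q U'
    · exact ⟨U, subset_rfl, hU, hmin⟩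
    · push_neg at hmin
      obtain ⟨U', hss, hq⟩ := hmin
      obtain ⟨W, hW, hWmin⟩ := ih U' hss hq
      exact ⟨W, hW.trans hss.subset, hWmin⟩

/-- if there is a coalition `S ⊆ V` for which `i` is critical,
then `i` belongs to some minimal quorum (hence `i` is in the top tier). -/
theorem critical_coalition_imp_mem_minimal_quorum
    (V : Finset α) (Q : α → Finset (Finset α)) (hFBAS : IsFBAS V Q)
    (i : α) (hi : i ∈ V)
    (h : ∃ S ⊆ V, Critical V Q i S) :
    ∃ U, IsMinimalQuorum V Q U ∧ i ∈ U := by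
  obtain ⟨S, hSV, hiS, ⟨U, hUq, hUS⟩, hno⟩ := h
  obtain ⟨W, hWU, hWmin⟩ := exists_minimal_quorum_subset V Q U hUq
  refine ⟨W, hWmin, ?_⟩
  by_contra hiW
  exact hno ⟨W, hWmin.1, fun x hx =>
    Finset.mem_erase.mpr ⟨fun hxi => hiW (hxi ▸ hx), hUS (hWU hx)⟩⟩
end

section
/- Let (V, Q) be an FBAS with |V| = n, and let i, j ∈ V be symmetric to each other, i.e., the transposition σ swapping i and j satisfies Q(σ(k)) = { σ[q] : q ∈ Q(k) } for all k ∈ V. Then the Shapley-Shubik power indices of i and j are equal: φ_i = φ_j, where φ_i = Σ_{S ∈ W^i} (|S| − 1)!(n − |S|)!/n!. Consequently, the reward distribution function d(i) = φ_i is symmetric. -/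
open scoped Classical

variable {α : Type*} [DecidableEq α]

section Aux

variable {α : Type*} [DecidableEq α]

lemma swap_image_self (V : Finset α) (i j : α) (hi : i ∈ V) (hj : j ∈ V) :
    V.image (Equiv.swap i j) = V := by
  apply Finset.Subset.antisymm
  · intro x hx
    simp only [Finset.mem_image] at hx
    obtain ⟨y, hy, rfl⟩ := hx
    rcases eq_or_ne y i with rfl | hyi
    · simpa [Equiv.swap_apply_left] using hj
    rcases eq_or_ne y j with rfl | hyj
    · simpa [Equiv.swap_apply_right] using hi
    · simpa [Equiv.swap_apply_of_ne_of_ne hyi hyj] using hy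
  · intro x hx
    simp only [Finset.mem_image]
    refine ⟨Equiv.swap i j x, ?_, by simp⟩
    rcases eq_or_ne x i with rfl | hyi
    · simpa [Equiv.swap_apply_left] using hj
    rcases eq_or_ne x j with rfl | hyj
    · simpa [Equiv.swap_apply_right] using hi
    · simpa [Equiv.swap_apply_of_ne_of_ne hyi hyj] using hx

lemma quorum_image (V : Finset α) (Q : α → Finset (Finset α))
    (i j : α) (hi : i ∈ V) (hj : j ∈ V)
    (hsym : ∀ k ∈ V,
      Q (Equiv.swap i j k) = (Q k).image (fun q => q.image (Equiv.swap i j)))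
    (U : Finset α) (hU : IsQuorum V Q U) :
    IsQuorum V Q (U.image (Equiv.swap i j)) := by
  obtain ⟨hne, hsub, hsl⟩ := hU
  refine ⟨hne.image _, ?_, ?_⟩
  · rw [← swap_image_self V i j hi hj]
    exact Finset.image_subset_image hsub
  · intro x hx
    simp only [Finset.mem_image] at hx
    obtain ⟨k, hk, rfl⟩ := hx
    obtain ⟨q, hq, hqU⟩ := hsl k hk
    refine ⟨q.image (Equiv.swap i j), ?_, Finset.image_subset_image hqU⟩
    rw [hsym k (hsub hk)]
    exact Finset.mem_image_of_mem _ hq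

lemma containsQuorum_image (V : Finset α) (Q : α → Finset (Finset α))
    (i j : α) (hi : i ∈ V) (hj : j ∈ V)
    (hsym : ∀ k ∈ V,
      Q (Equiv.swap i j k) = (Q k).image (fun q => q.image (Equiv.swap i j)))
    (S : Finset α) (h : ContainsQuorum V Q S) :
    ContainsQuorum V Q (S.image (Equiv.swap i j)) := by
  obtain ⟨U, hU, hUS⟩ := h
  exact ⟨U.image _, quorum_image V Q i j hi hj hsym U hU, Finset.image_subset_image hUS⟩

lemma image_swap_image_swap (i j : α) (S : Finset α) :
    (S.image (Equiv.swap i j)).image (Equiv.swap i j) = S := by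
  rw [Finset.image_image]
  simp [Function.comp_def]

lemma critical_image (V : Finset α) (Q : α → Finset (Finset α))
    (i j : α) (hi : i ∈ V) (hj : j ∈ V)
    (hsym : ∀ k ∈ V,
      Q (Equiv.swap i j k) = (Q k).image (fun q => q.image (Equiv.swap i j)))
    (S : Finset α) (h : Critical V Q i S) :
    Critical V Q j (S.image (Equiv.swap i j)) := by
  obtain ⟨hiS, hCQ, hNCQ⟩ := h
  refine ⟨?_, containsQuorum_image V Q i j hi hj hsym S hCQ, ?_⟩
  · have := Finset.mem_image_of_mem (Equiv.swap i j) hiS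
    simpa using this
  · intro hc
    apply hNCQ
    have herase : (S.image (Equiv.swap i j)).erase j
        = (S.erase i).image (Equiv.swap i j) := by
      rw [Finset.image_erase (Equiv.injective _), Equiv.swap_apply_left]
    rw [herase] at hc
    have := containsQuorum_image V Q i j hi hj hsym _ hc
    rwa [image_swap_image_swap] at this

end Aux

/-- if `i` and `j` are symmetric (the transposition swapping them
preserves `Q`), their Shapley-Shubik power indices are equal, so the reward
distribution `d(i) = φ_i` is symmetric. -/
theorem sspi_eq_of_symmetric
    (V : Finset α) (Q : α → Finset (Finset α)) (hFBAS : IsFBAS V Q)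
    (i j : α) (hi : i ∈ V) (hj : j ∈ V)
    (hsym : ∀ k ∈ V,
      Q (Equiv.swap i j k) = (Q k).image (fun q => q.image (Equiv.swap i j))) :
    sspi V Q i = sspi V Q j := by
  have hsym' : ∀ k ∈ V,
      Q (Equiv.swap j i k) = (Q k).image (fun q => q.image (Equiv.swap j i)) := by
    simpa [Equiv.swap_comm j i] using hsym
  unfold sspi
  refine Finset.sum_bij' (fun S _ => S.image (Equiv.swap i j))
    (fun S _ => S.image (Equiv.swap i j)) ?_ ?_ ?_ ?_ ?_
  · intro S hS
    simp only [Finset.mem_filter, Finset.mem_powerset] at hS ⊢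
    refine ⟨?_, critical_image V Q i j hi hj hsym S hS.2⟩
    rw [← swap_image_self V i j hi hj]
    exact Finset.image_subset_image hS.1
  · intro S hS
    simp only [Finset.mem_filter, Finset.mem_powerset] at hS ⊢
    constructor
    · rw [← swap_image_self V i j hi hj]
      exact Finset.image_subset_image hS.1
    · have := critical_image V Q j i hj hi hsym' S hS.2
      rwa [Equiv.swap_comm j i] at this
  · intro S _; exact image_swap_image_swap i j S
  · intro S _; exact image_swap_image_swap i j S
  · intro S _
    rw [Finset.card_image_of_injective _ (Equiv.injective _)]
end
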